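/- Let G : P2(ℝ^d) → (−∞,+∞] be proper, lower semicontinuous with respect to W2, and convex along generalized geodesics, with argmin G nonempty, and let τ > 0. If a sequence μ_n converges to μ in (P2(ℝ^d), W2), then W2(J_τ(μ_n), J_τ(μ)) → 0, where J_τ(μ) is the unique minimizer of ν ↦ G(ν) + (1/(2τ)) W2²(ν, μ). -/

import Mathlib

open MeasureTheory Filter Topology ENNReal

noncomputable section

/-- Euclidean space ℝ^d. -/
abbrev Ed (d : ℕ) := EuclideanSpace ℝ (Fin d)

/-- `P2 d`: Borel probability measures on ℝ^d with finite second moment. -/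
def P2 (d : ℕ) : Set (Measure (Ed d)) :=
  {μ | IsProbabilityMeasure μ ∧ ∫⁻ x, ENNReal.ofReal (‖x‖ ^ 2) ∂μ < ⊤}

/-- A coupling of `μ` and `ν`. -/
def IsCoupling {d : ℕ} (γ : Measure (Ed d × Ed d)) (μ ν : Measure (Ed d)) : Prop :=
  IsProbabilityMeasure γ ∧ γ.map Prod.fst = μ ∧ γ.map Prod.snd = ν

/-- `p`-th power transport cost of a plan `γ`. -/
def Wcost {d : ℕ} (p : ℝ) (γ : Measure (Ed d × Ed d)) : ℝ≥0∞ :=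
  ∫⁻ z, ENNReal.ofReal (‖z.1 - z.2‖ ^ p) ∂γ

/-- Minimal `p`-th power transport cost between `μ` and `ν`. -/
def minCost {d : ℕ} (p : ℝ) (μ ν : Measure (Ed d)) : ℝ≥0∞ :=
  ⨅ γ : {γ : Measure (Ed d × Ed d) // IsCoupling γ μ ν}, Wcost p γ.1

/-- The `p`-Wasserstein distance. -/
def Wp {d : ℕ} (p : ℝ) (μ ν : Measure (Ed d)) : ℝ :=
  (minCost p μ ν ^ (1 / p)).toReal

/-- The 2-Wasserstein distance. -/
def W2 {d : ℕ} (μ ν : Measure (Ed d)) : ℝ := Wp 2 μ ν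

/-- Optimal transport plan for the quadratic cost. -/
def IsOptimalPlan {d : ℕ} (γ : Measure (Ed d × Ed d)) (μ ν : Measure (Ed d)) : Prop :=
  IsCoupling γ μ ν ∧ Wcost 2 γ = minCost 2 μ ν

/-- `curve` is a generalized geodesic between `μ0` and `μ1` with base `base`. -/
def IsGenGeodesic {d : ℕ} (curve : ℝ → Measure (Ed d))
    (μ0 μ1 base : Measure (Ed d)) : Prop :=
  ∃ γ : Measure (Ed d × Ed d × Ed d),
    IsProbabilityMeasure γ ∧
    IsOptimalPlan (γ.map (fun z => (z.1, z.2.1))) base μ0 ∧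
    IsOptimalPlan (γ.map (fun z => (z.1, z.2.2))) base μ1 ∧
    ∀ t ∈ Set.Icc (0 : ℝ) 1,
      curve t = γ.map (fun z => (1 - t) • z.2.1 + t • z.2.2)

/-- Convexity along generalized geodesics. -/
def ConvexAlongGenGeod {d : ℕ} (G : Measure (Ed d) → EReal) : Prop :=
  ∀ μ0 ∈ P2 d, ∀ μ1 ∈ P2 d, ∀ base ∈ P2 d,
    ∃ curve : ℝ → Measure (Ed d), IsGenGeodesic curve μ0 μ1 base ∧
      ∀ t ∈ Set.Icc (0 : ℝ) 1,
        G (curve t) ≤ ((1 - t : ℝ) : EReal) * G μ0 + ((t : ℝ) : EReal) * G μ1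

/-- `G` is proper: never `⊥` and finite somewhere on `P2`. -/
def ProperOn {d : ℕ} (G : Measure (Ed d) → EReal) : Prop :=
  (∀ μ, G μ ≠ ⊥) ∧ ∃ μ ∈ P2 d, G μ ≠ ⊤

/-- Sequential lower semicontinuity with respect to `W2`. -/
def LscW2 {d : ℕ} (G : Measure (Ed d) → EReal) : Prop :=
  ∀ μ ∈ P2 d, ∀ s : ℕ → Measure (Ed d), (∀ n, s n ∈ P2 d) →
    Tendsto (fun n => W2 (s n) μ) atTop (𝓝 0) →
    G μ ≤ liminf (fun n => G (s n)) atTop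

/-- The JKO (Moreau–Yosida) energy `ν ↦ G ν + (1/(2τ)) W2²(ν, μ)`. -/
def JKOEnergy {d : ℕ} (G : Measure (Ed d) → EReal) (τ : ℝ)
    (μ ν : Measure (Ed d)) : EReal :=
  G ν + ((1 / (2 * τ) * (W2 ν μ) ^ 2 : ℝ) : EReal)

/-- `ν` is a minimizer over `P2` of the JKO energy with base point `μ`. -/
def IsJKOMin {d : ℕ} (G : Measure (Ed d) → EReal) (τ : ℝ)
    (μ ν : Measure (Ed d)) : Prop :=
  ν ∈ P2 d ∧ ∀ ρ ∈ P2 d, JKOEnergy G τ μ ν ≤ JKOEnergy G τ μ ρ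

/-- `μ` is a global minimizer of `G` over `P2`. -/
def IsArgminG {d : ℕ} (G : Measure (Ed d) → EReal) (μ : Measure (Ed d)) : Prop :=
  μ ∈ P2 d ∧ ∀ ν ∈ P2 d, G μ ≤ G ν

/-- The infimum of `G` over `P2`. -/
def infG {d : ℕ} (G : Measure (Ed d) → EReal) : EReal := sInf (G '' P2 d)

/-- Convergence in the topology `τ_{w,2}`: integrals of continuous functions with
subquadratic growth converge. -/
def TendstoWeak2 {d : ℕ} (s : ℕ → Measure (Ed d)) (μ : Measure (Ed d)) : Prop :=
  ∀ f : Ed d → ℝ, Continuous f →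
    Tendsto (fun x => f x / (1 + ‖x‖ ^ 2)) (comap (fun x : Ed d => ‖x‖) atTop) (𝓝 0) →
    Tendsto (fun n => ∫ x, f x ∂(s n)) atTop (𝓝 (∫ x, f x ∂μ))

/-- Narrow convergence: integrals of bounded continuous functions converge. -/
def TendstoNarrow {d : ℕ} (s : ℕ → Measure (Ed d)) (μ : Measure (Ed d)) : Prop :=
  ∀ f : Ed d → ℝ, Continuous f → (∃ M, ∀ x, |f x| ≤ M) →
    Tendsto (fun n => ∫ x, f x ∂(s n)) atTop (𝓝 (∫ x, f x ∂μ))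

/-- The pushforward by the explicit gradient step `x ↦ x - τ ∇F(x)`. -/
def gradStep {d : ℕ} (f' : Ed d → Ed d) (τ : ℝ) (μ : Measure (Ed d)) : Measure (Ed d) :=
  μ.map (fun x => x - τ • f' x)

/-- The composite objective `G(μ) = ∫ F dμ + H(μ)`. -/
def Gsum {d : ℕ} (F : Ed d → ℝ) (H : Measure (Ed d) → EReal)
    (μ : Measure (Ed d)) : EReal :=
  ((∫ x, F x ∂μ : ℝ) : EReal) + H μ

end

section AuxJKO

open MeasureTheory ENNReal

noncomputable section

variable {d : ℕ}

private lemma rp2 (x : ℝ) : x ^ (2:ℝ) = x ^ 2 := by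
  rw [show (2:ℝ) = ((2:ℕ):ℝ) by norm_num, Real.rpow_natCast]

private lemma wcost_eq (γ : Measure (Ed d × Ed d)) :
    Wcost 2 γ = ∫⁻ z, ENNReal.ofReal (‖z.1 - z.2‖ ^ 2) ∂γ := by
  unfold Wcost
  simp only [rp2]

private lemma cost_meas :
    Measurable fun z : Ed d × Ed d => ENNReal.ofReal (‖z.1 - z.2‖ ^ 2) :=
  ((measurable_fst.sub measurable_snd).norm.pow_const 2).ennreal_ofReal

private lemma moment_meas : Measurable fun x : Ed d => ENNReal.ofReal (‖x‖ ^ 2) :=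
  (measurable_norm.pow_const 2).ennreal_ofReal

private lemma minCost_le_coupling {γ : Measure (Ed d × Ed d)} {μ ν : Measure (Ed d)}
    (h : IsCoupling γ μ ν) : minCost 2 μ ν ≤ Wcost 2 γ :=
  iInf_le (fun γ : {γ : Measure (Ed d × Ed d) // IsCoupling γ μ ν} => Wcost 2 γ.1) ⟨γ, h⟩

private lemma isCoupling_map {α : Type*} [MeasurableSpace α] (γ : Measure α)
    [IsProbabilityMeasure γ] {f g : α → Ed d} (hf : Measurable f) (hg : Measurable g) :
    IsCoupling (γ.map fun a => (f a, g a)) (γ.map f) (γ.map g) := by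
  refine ⟨Measure.isProbabilityMeasure_map (hf.prodMk hg).aemeasurable, ?_, ?_⟩
  · rw [Measure.map_map measurable_fst (hf.prodMk hg)]; rfl
  · rw [Measure.map_map measurable_snd (hf.prodMk hg)]; rfl

private lemma wcost_map {α : Type*} [MeasurableSpace α] (γ : Measure α)
    {f g : α → Ed d} (hf : Measurable f) (hg : Measurable g) :
    Wcost 2 (γ.map fun a => (f a, g a)) = ∫⁻ a, ENNReal.ofReal (‖f a - g a‖ ^ 2) ∂γ := by
  rw [wcost_eq, lintegral_map cost_meas (hf.prodMk hg)]

private lemma marginal_fst {α : Type*} [MeasurableSpace α] {γ : Measure α}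
    {f g : α → Ed d} (hf : Measurable f) (hg : Measurable g) {μ ν : Measure (Ed d)}
    (h : IsCoupling (γ.map fun a => (f a, g a)) μ ν) : γ.map f = μ := by
  rw [← h.2.1, Measure.map_map measurable_fst (hf.prodMk hg)]; rfl

private lemma marginal_snd {α : Type*} [MeasurableSpace α] {γ : Measure α}
    {f g : α → Ed d} (hf : Measurable f) (hg : Measurable g) {μ ν : Measure (Ed d)}
    (h : IsCoupling (γ.map fun a => (f a, g a)) μ ν) : γ.map g = ν := by
  rw [← h.2.2, Measure.map_map measurable_snd (hf.prodMk hg)]; rfl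

private lemma minCost_le_symm (μ ν : Measure (Ed d)) : minCost 2 μ ν ≤ minCost 2 ν μ := by
  refine le_iInf ?_
  rintro ⟨γ, hp, h1, h2⟩
  haveI := hp
  have hc : IsCoupling (γ.map Prod.swap) μ ν := by
    refine ⟨Measure.isProbabilityMeasure_map measurable_swap.aemeasurable, ?_, ?_⟩
    · rw [Measure.map_map measurable_fst measurable_swap]
      exact h2
    · rw [Measure.map_map measurable_snd measurable_swap]
      exact h1
  calc minCost 2 μ ν ≤ Wcost 2 (γ.map Prod.swap) := minCost_le_coupling hc
  _ = Wcost 2 γ := by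
      rw [wcost_eq, wcost_eq, lintegral_map cost_meas measurable_swap]
      exact lintegral_congr fun z => by rw [Prod.fst_swap, Prod.snd_swap, norm_sub_rev]

private lemma minCost_symm (μ ν : Measure (Ed d)) : minCost 2 μ ν = minCost 2 ν μ :=
  le_antisymm (minCost_le_symm μ ν) (minCost_le_symm ν μ)

private lemma W2_symm (μ ν : Measure (Ed d)) : W2 μ ν = W2 ν μ := by
  unfold W2 Wp
  rw [minCost_symm]

private lemma two_sq_bound (a b : Ed d) : ‖a - b‖ ^ 2 ≤ 2 * ‖a‖ ^ 2 + 2 * ‖b‖ ^ 2 := by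
  have h := norm_sub_le a b
  nlinarith [norm_nonneg a, norm_nonneg b, sq_nonneg (‖a‖ - ‖b‖), norm_nonneg (a - b)]

private lemma minCost_lt_top {μ ν : Measure (Ed d)} (hμ : μ ∈ P2 d) (hν : ν ∈ P2 d) :
    minCost 2 μ ν < ⊤ := by
  obtain ⟨hμp, hμm⟩ := hμ
  obtain ⟨hνp, hνm⟩ := hν
  haveI := hμp; haveI := hνp
  have hc : IsCoupling (μ.prod ν) μ ν := by
    refine ⟨inferInstance, ?_, ?_⟩
    · simp
    · simp
  refine lt_of_le_of_lt (minCost_le_coupling hc) ?_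
  rw [wcost_eq]
  have hb : ∀ z : Ed d × Ed d, ENNReal.ofReal (‖z.1 - z.2‖ ^ 2) ≤
      2 * ENNReal.ofReal (‖z.1‖ ^ 2) + 2 * ENNReal.ofReal (‖z.2‖ ^ 2) := by
    intro z
    calc ENNReal.ofReal (‖z.1 - z.2‖ ^ 2)
        ≤ ENNReal.ofReal (2 * ‖z.1‖ ^ 2 + 2 * ‖z.2‖ ^ 2) :=
          ENNReal.ofReal_le_ofReal (two_sq_bound _ _)
      _ = 2 * ENNReal.ofReal (‖z.1‖ ^ 2) + 2 * ENNReal.ofReal (‖z.2‖ ^ 2) := by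
          rw [ENNReal.ofReal_add (by positivity) (by positivity),
            ENNReal.ofReal_mul (by norm_num), ENNReal.ofReal_mul (by norm_num)]
          norm_num
  refine lt_of_le_of_lt (lintegral_mono hb) ?_
  have hmf : Measurable fun z : Ed d × Ed d => ENNReal.ofReal (‖z.1‖ ^ 2) :=
    (measurable_fst.norm.pow_const 2).ennreal_ofReal
  have hms : Measurable fun z : Ed d × Ed d => ENNReal.ofReal (‖z.2‖ ^ 2) :=
    (measurable_snd.norm.pow_const 2).ennreal_ofReal
  rw [lintegral_add_left (hmf.const_mul 2), lintegral_const_mul 2 hmf,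
    lintegral_const_mul 2 hms]
  have h1 : ∫⁻ z : Ed d × Ed d, ENNReal.ofReal (‖z.1‖ ^ 2) ∂(μ.prod ν)
      = ∫⁻ x, ENNReal.ofReal (‖x‖ ^ 2) ∂μ := by
    rw [← lintegral_map moment_meas measurable_fst, Measure.map_fst_prod, measure_univ, one_smul]
  have h2 : ∫⁻ z : Ed d × Ed d, ENNReal.ofReal (‖z.2‖ ^ 2) ∂(μ.prod ν)
      = ∫⁻ x, ENNReal.ofReal (‖x‖ ^ 2) ∂ν := by
    rw [← lintegral_map moment_meas measurable_snd, Measure.map_snd_prod, measure_univ, one_smul]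
  rw [h1, h2]
  exact ENNReal.add_lt_top.2 ⟨ENNReal.mul_lt_top (by norm_num) hμm,
    ENNReal.mul_lt_top (by norm_num) hνm⟩

private lemma W2_rpow (μ ν : Measure (Ed d)) :
    W2 μ ν = (minCost 2 μ ν).toReal ^ ((2:ℝ)⁻¹) := by
  unfold W2 Wp
  rw [ENNReal.toReal_rpow]
  norm_num

private lemma W2_nonneg (μ ν : Measure (Ed d)) : 0 ≤ W2 μ ν :=
  ENNReal.toReal_nonneg

private lemma W2_sq (μ ν : Measure (Ed d)) : W2 μ ν ^ 2 = (minCost 2 μ ν).toReal := by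
  rw [W2_rpow, ← Real.rpow_natCast ((minCost 2 μ ν).toReal ^ ((2:ℝ)⁻¹)) 2,
    ← Real.rpow_mul ENNReal.toReal_nonneg]
  norm_num

private lemma W2_triangle {G : Measure (Ed d) → EReal} (hConv : ConvexAlongGenGeod G)
    {a b base : Measure (Ed d)} (ha : a ∈ P2 d) (hb : b ∈ P2 d) (hbase : base ∈ P2 d) :
    W2 a b ≤ W2 base a + W2 base b := by
  obtain ⟨curve, ⟨γ, hγp, ⟨hc12, hw12⟩, ⟨hc13, hw13⟩, -⟩, -⟩ := hConv a ha b hb base hbase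
  haveI := hγp
  have my2 : Measurable fun z : Ed d × Ed d × Ed d => z.2.1 :=
    measurable_fst.comp measurable_snd
  have my3 : Measurable fun z : Ed d × Ed d × Ed d => z.2.2 :=
    measurable_snd.comp measurable_snd
  set f : Ed d × Ed d × Ed d → ℝ≥0∞ := fun z => ENNReal.ofReal ‖z.1 - z.2.1‖ with hf
  set g : Ed d × Ed d × Ed d → ℝ≥0∞ := fun z => ENNReal.ofReal ‖z.1 - z.2.2‖ with hg
  have hfme : Measurable f := (measurable_fst.sub my2).norm.ennreal_ofReal
  have hgme : Measurable g := (measurable_fst.sub my3).norm.ennreal_ofReal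
  have hA : ∫⁻ z, f z ^ (2:ℝ) ∂γ = minCost 2 base a := by
    have he : ∀ z : Ed d × Ed d × Ed d,
        f z ^ (2:ℝ) = ENNReal.ofReal (‖z.1 - z.2.1‖ ^ 2) := fun z => by
      rw [hf, ENNReal.ofReal_rpow_of_nonneg (norm_nonneg _) (by norm_num), rp2]
    rw [lintegral_congr he, ← wcost_map γ measurable_fst my2]
    exact hw12
  have hB : ∫⁻ z, g z ^ (2:ℝ) ∂γ = minCost 2 base b := by
    have he : ∀ z : Ed d × Ed d × Ed d,
        g z ^ (2:ℝ) = ENNReal.ofReal (‖z.1 - z.2.2‖ ^ 2) := fun z => by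
      rw [hg, ENNReal.ofReal_rpow_of_nonneg (norm_nonneg _) (by norm_num), rp2]
    rw [lintegral_congr he, ← wcost_map γ measurable_fst my3]
    exact hw13
  have hya : γ.map (fun z : Ed d × Ed d × Ed d => z.2.1) = a :=
    marginal_snd measurable_fst my2 hc12
  have hzb : γ.map (fun z : Ed d × Ed d × Ed d => z.2.2) = b :=
    marginal_snd measurable_fst my3 hc13
  have hT : minCost 2 a b ≤ ∫⁻ z, ((f + g) z) ^ (2:ℝ) ∂γ := by
    have hcab : IsCoupling (γ.map fun z : Ed d × Ed d × Ed d => (z.2.1, z.2.2)) a b := by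
      have h := isCoupling_map γ my2 my3
      rwa [hya, hzb] at h
    refine le_trans (minCost_le_coupling hcab) ?_
    rw [wcost_map γ my2 my3]
    refine lintegral_mono fun z => ?_
    have h1 : ‖z.2.1 - z.2.2‖ ≤ ‖z.1 - z.2.1‖ + ‖z.1 - z.2.2‖ := by
      have h2 := norm_sub_le_norm_sub_add_norm_sub z.2.1 z.1 z.2.2
      rwa [norm_sub_rev z.2.1 z.1] at h2
    calc ENNReal.ofReal (‖z.2.1 - z.2.2‖ ^ 2)
        ≤ ENNReal.ofReal ((‖z.1 - z.2.1‖ + ‖z.1 - z.2.2‖) ^ 2) := by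
          refine ENNReal.ofReal_le_ofReal ?_
          have h0 : (0:ℝ) ≤ ‖z.2.1 - z.2.2‖ := norm_nonneg _
          nlinarith
      _ = ((f + g) z) ^ (2:ℝ) := by
          rw [Pi.add_apply, hf, hg, ← ENNReal.ofReal_add (norm_nonneg _) (norm_nonneg _),
            ENNReal.ofReal_rpow_of_nonneg (by positivity) (by norm_num), rp2]
  have hMink := ENNReal.lintegral_Lp_add_le (μ := γ) hfme.aemeasurable hgme.aemeasurable
    (by norm_num : (1:ℝ) ≤ 2)
  have step : minCost 2 a b ^ (1/(2:ℝ))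
      ≤ minCost 2 base a ^ (1/(2:ℝ)) + minCost 2 base b ^ (1/(2:ℝ)) := by
    calc minCost 2 a b ^ (1/(2:ℝ))
        ≤ (∫⁻ z, ((f + g) z) ^ (2:ℝ) ∂γ) ^ (1/(2:ℝ)) :=
          ENNReal.rpow_le_rpow hT (by norm_num)
      _ ≤ (∫⁻ z, f z ^ (2:ℝ) ∂γ) ^ (1/(2:ℝ)) + (∫⁻ z, g z ^ (2:ℝ) ∂γ) ^ (1/(2:ℝ)) := hMink
      _ = minCost 2 base a ^ (1/(2:ℝ)) + minCost 2 base b ^ (1/(2:ℝ)) := by rw [hA, hB]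
  have hfin1 : minCost 2 base a ^ (1/(2:ℝ)) ≠ ⊤ :=
    ENNReal.rpow_ne_top_of_nonneg (by norm_num) (minCost_lt_top hbase ha).ne
  have hfin2 : minCost 2 base b ^ (1/(2:ℝ)) ≠ ⊤ :=
    ENNReal.rpow_ne_top_of_nonneg (by norm_num) (minCost_lt_top hbase hb).ne
  show (minCost 2 a b ^ (1/(2:ℝ))).toReal
      ≤ (minCost 2 base a ^ (1/(2:ℝ))).toReal + (minCost 2 base b ^ (1/(2:ℝ))).toReal
  calc (minCost 2 a b ^ (1/(2:ℝ))).toReal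
      ≤ (minCost 2 base a ^ (1/(2:ℝ)) + minCost 2 base b ^ (1/(2:ℝ))).toReal :=
        ENNReal.toReal_mono (by exact ENNReal.add_ne_top.2 ⟨hfin1, hfin2⟩) step
    _ = _ := ENNReal.toReal_add hfin1 hfin2

private lemma half_step {G : Measure (Ed d) → EReal} (hConv : ConvexAlongGenGeod G)
    {μ0 μ1 base : Measure (Ed d)} (h0 : μ0 ∈ P2 d) (h1 : μ1 ∈ P2 d) (hb : base ∈ P2 d) :
    ∃ ρ ∈ P2 d,
      G ρ ≤ ((1 - 2⁻¹ : ℝ) : EReal) * G μ0 + ((2⁻¹ : ℝ) : EReal) * G μ1 ∧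
      W2 ρ base ^ 2 + 4⁻¹ * W2 μ0 μ1 ^ 2
        ≤ 2⁻¹ * W2 μ0 base ^ 2 + 2⁻¹ * W2 μ1 base ^ 2 := by
  obtain ⟨curve, ⟨γ, hγp, ⟨hc12, hw12⟩, ⟨hc13, hw13⟩, hcurve⟩, hGc⟩ := hConv μ0 h0 μ1 h1 base hb
  haveI := hγp
  have ht : (2⁻¹:ℝ) ∈ Set.Icc (0:ℝ) 1 := by constructor <;> norm_num
  have my2 : Measurable fun z : Ed d × Ed d × Ed d => z.2.1 :=
    measurable_fst.comp measurable_snd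
  have my3 : Measurable fun z : Ed d × Ed d × Ed d => z.2.2 :=
    measurable_snd.comp measurable_snd
  set ι : Ed d × Ed d × Ed d → Ed d :=
    fun z => (1 - (2⁻¹:ℝ)) • z.2.1 + (2⁻¹:ℝ) • z.2.2 with hι
  have hρ : curve 2⁻¹ = γ.map ι := hcurve 2⁻¹ ht
  have hmι : Measurable ι := by rw [hι]; fun_prop
  have hbase' : γ.map (fun z : Ed d × Ed d × Ed d => z.1) = base :=
    marginal_fst measurable_fst my2 hc12
  have hμ0' : γ.map (fun z : Ed d × Ed d × Ed d => z.2.1) = μ0 :=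
    marginal_snd measurable_fst my2 hc12
  have hμ1' : γ.map (fun z : Ed d × Ed d × Ed d => z.2.2) = μ1 :=
    marginal_snd measurable_fst my3 hc13
  have hρP2 : γ.map ι ∈ P2 d := by
    refine ⟨Measure.isProbabilityMeasure_map hmι.aemeasurable, ?_⟩
    rw [lintegral_map moment_meas hmι]
    have hpt : ∀ z : Ed d × Ed d × Ed d, ENNReal.ofReal (‖ι z‖ ^ 2)
        ≤ 2 * ENNReal.ofReal (‖z.2.1‖ ^ 2) + 2 * ENNReal.ofReal (‖z.2.2‖ ^ 2) := by
      intro z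
      have h1 : ‖ι z‖ ≤ ‖z.2.1‖ + ‖z.2.2‖ := by
        refine le_trans (norm_add_le _ _) ?_
        rw [norm_smul, norm_smul, Real.norm_eq_abs, Real.norm_eq_abs,
          show |(1 - (2⁻¹:ℝ))| = 2⁻¹ by rw [abs_of_pos] <;> norm_num,
          show |(2⁻¹:ℝ)| = 2⁻¹ by rw [abs_of_pos] <;> norm_num]
        nlinarith [norm_nonneg z.2.1, norm_nonneg z.2.2]
      calc ENNReal.ofReal (‖ι z‖ ^ 2)
          ≤ ENNReal.ofReal (2 * ‖z.2.1‖ ^ 2 + 2 * ‖z.2.2‖ ^ 2) := by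
            refine ENNReal.ofReal_le_ofReal ?_
            nlinarith [h1, pow_le_pow_left₀ (norm_nonneg (ι z)) h1 2,
              sq_nonneg (‖z.2.1‖ - ‖z.2.2‖), norm_nonneg (ι z), norm_nonneg z.2.1,
              norm_nonneg z.2.2]
        _ = 2 * ENNReal.ofReal (‖z.2.1‖ ^ 2) + 2 * ENNReal.ofReal (‖z.2.2‖ ^ 2) := by
            rw [ENNReal.ofReal_add (by positivity) (by positivity),
              ENNReal.ofReal_mul (by norm_num), ENNReal.ofReal_mul (by norm_num)]
            norm_num
    refine lt_of_le_of_lt (lintegral_mono hpt) ?_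
    have hm1 : Measurable fun z : Ed d × Ed d × Ed d => ENNReal.ofReal (‖z.2.1‖ ^ 2) :=
      (my2.norm.pow_const 2).ennreal_ofReal
    have hm2 : Measurable fun z : Ed d × Ed d × Ed d => ENNReal.ofReal (‖z.2.2‖ ^ 2) :=
      (my3.norm.pow_const 2).ennreal_ofReal
    rw [lintegral_add_left (hm1.const_mul 2), lintegral_const_mul 2 hm1,
      lintegral_const_mul 2 hm2]
    have e0 : ∫⁻ z, ENNReal.ofReal (‖z.2.1‖ ^ 2) ∂γ = ∫⁻ x, ENNReal.ofReal (‖x‖ ^ 2) ∂μ0 := by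
      rw [← hμ0', lintegral_map moment_meas my2]
    have e1 : ∫⁻ z, ENNReal.ofReal (‖z.2.2‖ ^ 2) ∂γ = ∫⁻ x, ENNReal.ofReal (‖x‖ ^ 2) ∂μ1 := by
      rw [← hμ1', lintegral_map moment_meas my3]
    rw [e0, e1]
    exact ENNReal.add_lt_top.2 ⟨ENNReal.mul_lt_top (by norm_num) h0.2,
      ENNReal.mul_lt_top (by norm_num) h1.2⟩
  have hG := hGc 2⁻¹ ht
  rw [hρ] at hG
  have hpt : ∀ z : Ed d × Ed d × Ed d,
      ENNReal.ofReal (‖ι z - z.1‖ ^ 2)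
        + ENNReal.ofReal (4⁻¹:ℝ) * ENNReal.ofReal (‖z.2.1 - z.2.2‖ ^ 2)
      = ENNReal.ofReal (2⁻¹:ℝ) * ENNReal.ofReal (‖z.1 - z.2.1‖ ^ 2)
        + ENNReal.ofReal (2⁻¹:ℝ) * ENNReal.ofReal (‖z.1 - z.2.2‖ ^ 2) := by
    intro z
    rw [← ENNReal.ofReal_mul (by norm_num : (0:ℝ) ≤ 4⁻¹),
      ← ENNReal.ofReal_mul (by norm_num : (0:ℝ) ≤ 2⁻¹),
      ← ENNReal.ofReal_mul (by norm_num : (0:ℝ) ≤ 2⁻¹),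
      ← ENNReal.ofReal_add (by positivity) (by positivity),
      ← ENNReal.ofReal_add (by positivity) (by positivity)]
    congr 1
    have e1 : ι z - z.1 = (2⁻¹:ℝ) • ((z.2.1 - z.1) + (z.2.2 - z.1)) := by
      rw [hι]; module
    have e2 : z.2.1 - z.2.2 = (z.2.1 - z.1) - (z.2.2 - z.1) := by abel
    have e3 : ‖z.1 - z.2.1‖ = ‖z.2.1 - z.1‖ := norm_sub_rev _ _
    have e4 : ‖z.1 - z.2.2‖ = ‖z.2.2 - z.1‖ := norm_sub_rev _ _
    rw [e1, e2, e3, e4, norm_smul, Real.norm_eq_abs,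
      show |(2⁻¹:ℝ)| = 2⁻¹ by rw [abs_of_pos] <;> norm_num]
    have p1 := norm_add_sq_real (z.2.1 - z.1) (z.2.2 - z.1)
    have p2 := norm_sub_sq_real (z.2.1 - z.1) (z.2.2 - z.1)
    nlinarith [p1, p2]
  have hmA : Measurable fun z : Ed d × Ed d × Ed d => ENNReal.ofReal (‖ι z - z.1‖ ^ 2) :=
    ((hmι.sub measurable_fst).norm.pow_const 2).ennreal_ofReal
  have hmB : Measurable fun z : Ed d × Ed d × Ed d => ENNReal.ofReal (‖z.2.1 - z.2.2‖ ^ 2) :=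
    ((my2.sub my3).norm.pow_const 2).ennreal_ofReal
  have hmC1 : Measurable fun z : Ed d × Ed d × Ed d => ENNReal.ofReal (‖z.1 - z.2.1‖ ^ 2) :=
    ((measurable_fst.sub my2).norm.pow_const 2).ennreal_ofReal
  have hmC2 : Measurable fun z : Ed d × Ed d × Ed d => ENNReal.ofReal (‖z.1 - z.2.2‖ ^ 2) :=
    ((measurable_fst.sub my3).norm.pow_const 2).ennreal_ofReal
  have hint : (∫⁻ z, ENNReal.ofReal (‖ι z - z.1‖ ^ 2) ∂γ)
      + ENNReal.ofReal (4⁻¹:ℝ) * ∫⁻ z, ENNReal.ofReal (‖z.2.1 - z.2.2‖ ^ 2) ∂γ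
      = ENNReal.ofReal (2⁻¹:ℝ) * minCost 2 base μ0
        + ENNReal.ofReal (2⁻¹:ℝ) * minCost 2 base μ1 := by
    rw [← hw12, ← hw13, wcost_map γ measurable_fst my2, wcost_map γ measurable_fst my3,
      ← lintegral_const_mul _ hmB, ← lintegral_add_left hmA,
      ← lintegral_const_mul _ hmC1, ← lintegral_const_mul _ hmC2,
      ← lintegral_add_left (hmC1.const_mul _)]
    exact lintegral_congr hpt
  have hle : minCost 2 (γ.map ι) base + ENNReal.ofReal (4⁻¹:ℝ) * minCost 2 μ0 μ1
      ≤ ENNReal.ofReal (2⁻¹:ℝ) * minCost 2 base μ0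
        + ENNReal.ofReal (2⁻¹:ℝ) * minCost 2 base μ1 := by
    rw [← hint]
    refine add_le_add ?_ (mul_le_mul_right ?_ _)
    · have hc : IsCoupling (γ.map fun z : Ed d × Ed d × Ed d => (ι z, z.1)) (γ.map ι) base := by
        have h := isCoupling_map γ hmι measurable_fst
        rwa [hbase'] at h
      calc minCost 2 (γ.map ι) base
          ≤ Wcost 2 (γ.map fun z : Ed d × Ed d × Ed d => (ι z, z.1)) :=
            minCost_le_coupling hc
        _ = _ := wcost_map γ hmι measurable_fst
    · have hc : IsCoupling (γ.map fun z : Ed d × Ed d × Ed d => (z.2.1, z.2.2)) μ0 μ1 := by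
        have h := isCoupling_map γ my2 my3
        rwa [hμ0', hμ1'] at h
      calc minCost 2 μ0 μ1
          ≤ Wcost 2 (γ.map fun z : Ed d × Ed d × Ed d => (z.2.1, z.2.2)) :=
            minCost_le_coupling hc
        _ = _ := wcost_map γ my2 my3
  have fρ : minCost 2 (γ.map ι) base ≠ ⊤ := (minCost_lt_top hρP2 hb).ne
  have fm : minCost 2 μ0 μ1 ≠ ⊤ := (minCost_lt_top h0 h1).ne
  have f0 : minCost 2 base μ0 ≠ ⊤ := (minCost_lt_top hb h0).ne
  have f1 : minCost 2 base μ1 ≠ ⊤ := (minCost_lt_top hb h1).ne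
  have hfm4 : ENNReal.ofReal (4⁻¹:ℝ) * minCost 2 μ0 μ1 ≠ ⊤ :=
    ENNReal.mul_ne_top ENNReal.ofReal_ne_top fm
  have hf02 : ENNReal.ofReal (2⁻¹:ℝ) * minCost 2 base μ0 ≠ ⊤ :=
    ENNReal.mul_ne_top ENNReal.ofReal_ne_top f0
  have hf12 : ENNReal.ofReal (2⁻¹:ℝ) * minCost 2 base μ1 ≠ ⊤ :=
    ENNReal.mul_ne_top ENNReal.ofReal_ne_top f1
  refine ⟨γ.map ι, hρP2, hG, ?_⟩
  have h2 := ENNReal.toReal_mono (by exact ENNReal.add_ne_top.2 ⟨hf02, hf12⟩) hle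
  rw [ENNReal.toReal_add fρ hfm4, ENNReal.toReal_add hf02 hf12] at h2
  simp only [ENNReal.toReal_mul] at h2
  rw [ENNReal.toReal_ofReal (by norm_num : (0:ℝ) ≤ 4⁻¹),
    ENNReal.toReal_ofReal (by norm_num : (0:ℝ) ≤ 2⁻¹)] at h2
  rw [W2_sq, W2_sq, W2_sq, W2_sq, minCost_symm μ0 base, minCost_symm μ1 base]
  exact h2

private lemma ereal_le_real {a b : EReal} {r s : ℝ} (ha : a ≠ ⊥) (ha' : a ≠ ⊤)
    (hb : b ≠ ⊥) (hb' : b ≠ ⊤) (h : a + (r:EReal) ≤ b + (s:EReal)) :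
    a.toReal + r ≤ b.toReal + s := by
  rw [← EReal.coe_toReal ha' ha, ← EReal.coe_toReal hb' hb, ← EReal.coe_add, ← EReal.coe_add] at h
  exact EReal.coe_le_coe_iff.1 h

private lemma ereal_conv {x a b : EReal} (hx : x ≠ ⊥) (ha : a ≠ ⊥) (ha' : a ≠ ⊤)
    (hb : b ≠ ⊥) (hb' : b ≠ ⊤)
    (h : x ≤ ((1 - 2⁻¹ : ℝ) : EReal) * a + ((2⁻¹ : ℝ) : EReal) * b) :
    x ≠ ⊤ ∧ x.toReal ≤ (1 - 2⁻¹) * a.toReal + 2⁻¹ * b.toReal := by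
  rw [← EReal.coe_toReal ha' ha, ← EReal.coe_toReal hb' hb, ← EReal.coe_mul, ← EReal.coe_mul,
    ← EReal.coe_add] at h
  refine ⟨ne_top_of_le_ne_top (EReal.coe_ne_top _) h, ?_⟩
  have h2 := EReal.toReal_le_toReal h hx (EReal.coe_ne_top _)
  rwa [EReal.toReal_coe] at h2

private lemma jko_real {G : Measure (Ed d) → EReal} (hbot : ∀ μ, G μ ≠ ⊥)
    {τ : ℝ} {μm ρ1 ρ2 : Measure (Ed d)}
    (h : JKOEnergy G τ μm ρ1 ≤ JKOEnergy G τ μm ρ2) (h2 : G ρ2 ≠ ⊤) :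
    G ρ1 ≠ ⊤ ∧ (G ρ1).toReal + 1 / (2 * τ) * W2 ρ1 μm ^ 2
      ≤ (G ρ2).toReal + 1 / (2 * τ) * W2 ρ2 μm ^ 2 := by
  unfold JKOEnergy at h
  have h1top : G ρ1 ≠ ⊤ := by
    intro htop
    rw [htop, EReal.top_add_coe] at h
    rw [← EReal.coe_toReal h2 (hbot ρ2), ← EReal.coe_add] at h
    exact EReal.coe_ne_top _ (top_le_iff.1 h)
  exact ⟨h1top, ereal_le_real (hbot ρ1) h1top (hbot ρ2) h2 h⟩

end

end AuxJKO

/-- `W2`-continuity of the JKO operator. -/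
theorem jko_continuity {d : ℕ} (G : Measure (Ed d) → EReal)
    (hProper : ProperOn G) (hLsc : LscW2 G) (hConv : ConvexAlongGenGeod G)
    (hArgmin : ∃ μstar, IsArgminG G μstar) (τ : ℝ) (hτ : 0 < τ)
    (J : Measure (Ed d) → Measure (Ed d))
    (hJ : ∀ μ ∈ P2 d, IsJKOMin G τ μ (J μ)) :
    ∀ μ ∈ P2 d, ∀ s : ℕ → Measure (Ed d), (∀ n, s n ∈ P2 d) →
      Tendsto (fun n => W2 (s n) μ) atTop (𝓝 0) →
      Tendsto (fun n => W2 (J (s n)) (J μ)) atTop (𝓝 0) := by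
  obtain ⟨hbot, μ₀, hμ₀, hμ₀top⟩ := hProper
  obtain ⟨μstar, hμsP2, hμsmin⟩ := hArgmin
  have hGμs_top : G μstar ≠ ⊤ := ne_top_of_le_ne_top hμ₀top (hμsmin μ₀ hμ₀)
  intro μ hμ s hs hW
  obtain ⟨hJμP2, hJμmin⟩ := hJ μ hμ
  have hfinJμ : G (J μ) ≠ ⊤ := (jko_real hbot (hJμmin μstar hμsP2) hGμs_top).1
  set b := W2 (J μ) μ with hbdef
  set A := W2 μ μstar with hAdef
  set e : ℕ → ℝ := fun n => W2 (s n) μ with hedef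
  have he0 : ∀ n, 0 ≤ e n := fun n => W2_nonneg _ _
  have key : ∀ n, W2 (J (s n)) (J μ) ^ 2 ≤ 4 * e n * (A + e n + b) + 4 * e n ^ 2 := by
    intro n
    obtain ⟨hJnP2, hJnmin⟩ := hJ (s n) (hs n)
    obtain ⟨hfinJn, hB1⟩ := jko_real hbot (hJnmin μstar hμsP2) hGμs_top
    have hgs_le : (G μstar).toReal ≤ (G (J (s n))).toReal :=
      EReal.toReal_le_toReal (hμsmin _ hJnP2) (hbot _) hfinJn
    have hcpos : (0:ℝ) < 1 / (2 * τ) := by positivity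
    have ha_n : W2 (J (s n)) (s n) ≤ W2 μstar (s n) := by
      have hXY : 1 / (2 * τ) * W2 (J (s n)) (s n) ^ 2
          ≤ 1 / (2 * τ) * W2 μstar (s n) ^ 2 := by linarith [hB1, hgs_le]
      have hsq := le_of_mul_le_mul_left hXY hcpos
      have h2 := Real.sqrt_le_sqrt hsq
      rwa [Real.sqrt_sq (W2_nonneg (J (s n)) (s n)), Real.sqrt_sq (W2_nonneg μstar (s n))] at h2
    have htri1 : W2 μstar (s n) ≤ A + e n := by
      have h := W2_triangle hConv hμsP2 (hs n) hμ
      rw [W2_symm μ (s n)] at h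
      exact h
    have hV0 : W2 (J (s n)) μ ≤ W2 (J (s n)) (s n) + e n := by
      have h := W2_triangle hConv hJnP2 hμ (hs n)
      rw [W2_symm (s n) (J (s n))] at h
      exact h
    have hW1 : W2 (J μ) (s n) ≤ b + e n := by
      have h := W2_triangle hConv hJμP2 (hs n) hμ
      rw [W2_symm μ (J μ), W2_symm μ (s n)] at h
      exact h
    obtain ⟨ρ, hρP2, hGρ, hWρ⟩ := half_step hConv hJnP2 hJμP2 (hs n)
    obtain ⟨hGρtop, hGρreal⟩ := ereal_conv (hbot ρ) (hbot _) hfinJn (hbot _) hfinJμ hGρ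
    obtain ⟨-, h3⟩ := jko_real hbot (hJnmin ρ hρP2) hGρtop
    obtain ⟨-, h4⟩ := jko_real hbot (hJμmin (J (s n)) hJnP2) hfinJn
    have hmul := mul_le_mul_of_nonneg_left hWρ hcpos.le
    have hq : 1 / (2 * τ) * W2 (J (s n)) (J μ) ^ 2
        ≤ 1 / (2 * τ) * (2 * (W2 (J (s n)) μ ^ 2 - b ^ 2)
            + 2 * (W2 (J μ) (s n) ^ 2 - W2 (J (s n)) (s n) ^ 2)) := by
      linarith [h3, h4, hGρreal, hmul]
    have hq2 := le_of_mul_le_mul_left hq hcpos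
    have hae : 4 * e n * W2 (J (s n)) (s n) ≤ 4 * e n * (A + e n) :=
      mul_le_mul_of_nonneg_left (le_trans ha_n htri1) (by linarith [he0 n])
    have hp1 := pow_le_pow_left₀ (W2_nonneg (J (s n)) μ) hV0 2
    have hp2 := pow_le_pow_left₀ (W2_nonneg (J μ) (s n)) hW1 2
    nlinarith [hq2, hp1, hp2, hae, he0 n, W2_nonneg (J (s n)) (s n), W2_nonneg (J μ) μ]
  have hb0 : ∀ n, 0 ≤ W2 (J (s n)) (J μ) := fun n => W2_nonneg _ _
  have hbound : ∀ n, W2 (J (s n)) (J μ) ≤ Real.sqrt (4 * e n * (A + e n + b) + 4 * e n ^ 2) :=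
    fun n => Real.le_sqrt_of_sq_le (key n)
  refine squeeze_zero hb0 hbound ?_
  have hlim : Tendsto (fun n => 4 * e n * (A + e n + b) + 4 * e n ^ 2) atTop (𝓝 0) := by
    have hcont : Continuous fun t : ℝ => 4 * t * (A + t + b) + 4 * t ^ 2 := by continuity
    have h2 := (hcont.tendsto 0).comp hW
    simp only [Function.comp_def] at h2
    convert h2 using 2
    norm_num
  have h3 := (Real.continuous_sqrt.tendsto 0).comp hlim
  simp only [Function.comp_def] at h3
  convert h3 using 2
  rw [Real.sqrt_zero]
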